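/- Let E, F be n×d real matrices with orthonormal columns, and let Ω* be the orthogonal d×d matrix minimizing ‖EΩ − F‖_F over orthogonal matrices Ω. Then ‖EΩ* − F‖_F ≤ ‖EEᵀ − FFᵀ‖_F ≤ √2 · ‖EΩ* − F‖_F. -/

import Mathlib

open Matrix BigOperators

/-- Squared Frobenius norm of a real matrix. -/
noncomputable def frobSq {n m : ℕ} (M : Matrix (Fin n) (Fin m) ℝ) : ℝ :=
  ∑ i, ∑ j, (M i j) ^ 2

/-- Frobenius norm of a real matrix. -/
noncomputable def frob {n m : ℕ} (M : Matrix (Fin n) (Fin m) ℝ) : ℝ :=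
  Real.sqrt (frobSq M)

/-! With `M = Eᵀ F`, both norms are affine in traces: `‖EΩ - F‖² = 2d - 2 tr(Ωᵀ M)` and
`‖EEᵀ - FFᵀ‖² = 2d - 2 tr(Mᵀ M)`. The upper bound is then `‖M - Ω*‖² ≥ 0`. For the lower bound,
`M` is a contraction, so its singular values satisfy `σ² ≤ σ`; the polar factor `Ω = W Qᵀ` of a
singular value decomposition `M = W Σ Qᵀ` has `tr(Ωᵀ M) = ∑ σ ≥ ∑ σ² = tr(Mᵀ M)`, and `Ω*` does at
least as well. -/

section Orthogonal

variable {ι : Type*} [Fintype ι] [DecidableEq ι]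

lemma transpose_mul_self_eq_one_of_orthonormalBasis
    (b : OrthonormalBasis ι ℝ (EuclideanSpace ℝ ι)) :
    (of fun i j => b j i)ᵀ * of (fun i j => b j i) = 1 := by
  ext j k
  simpa [mul_apply, one_apply, PiLp.inner_apply, mul_comm] using
    orthonormal_iff_ite.mp b.orthonormal j k

lemma exists_orthogonal_transpose_mul_mul_eq_diagonal {S : Matrix ι ι ℝ} (hS : S.IsHermitian) :
    ∃ (Q : Matrix ι ι ℝ) (μ : ι → ℝ), Qᵀ * Q = 1 ∧ Qᵀ * S * Q = diagonal μ := by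
  refine ⟨hS.eigenvectorUnitary, hS.eigenvalues, ?_, ?_⟩
  · simpa [star_eq_conjTranspose, conjTranspose_eq_transpose_of_trivial] using
      Unitary.coe_star_mul_self hS.eigenvectorUnitary
  · simpa [Unitary.conjStarAlgAut_apply, star_eq_conjTranspose,
      conjTranspose_eq_transpose_of_trivial] using hS.conjStarAlgAut_star_eigenvectorUnitary

lemma exists_orthogonal_eq_mul_diagonal_sqrt {N : Matrix ι ι ℝ} {μ : ι → ℝ}
    (hN : Nᵀ * N = diagonal μ) :
    ∃ W : Matrix ι ι ℝ, Wᵀ * W = 1 ∧ N = W * diagonal (fun j => √(μ j)) := by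
  set c : ι → EuclideanSpace ℝ ι := fun j => WithLp.toLp 2 fun i => N i j
  have hc : ∀ j k, inner ℝ (c j) (c k) = if j = k then μ j else 0 := fun j k => by
    rw [← diagonal_apply, ← hN]
    simp [c, mul_apply, PiLp.inner_apply, mul_comm]
  have hμ : ∀ j, 0 ≤ μ j := fun j => by
    simpa only [hc, if_true] using real_inner_self_nonneg (x := c j)
  -- Normalise the nonzero columns and extend them to an orthonormal basis; the zero columns
  -- are matched by `√0 = 0` whatever the basis vector there is.
  set v : ι → EuclideanSpace ℝ ι := fun j => (√(μ j))⁻¹ • c j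
  have hv : Orthonormal ℝ ({j | μ j ≠ 0}.domRestrict v) := by
    rw [orthonormal_iff_ite]
    rintro ⟨j, hj⟩ ⟨k, hk⟩
    simp only [Set.domRestrict_apply, v, real_inner_smul_left, real_inner_smul_right, hc,
      Subtype.mk.injEq]
    split_ifs with hjk
    · subst hjk
      field_simp
      rw [Real.sq_sqrt (hμ j), div_self hj]
    · simp
  obtain ⟨b, hb⟩ := hv.exists_orthonormalBasis_extension_of_card_eq (by simp)
  refine ⟨of fun i j => b j i, transpose_mul_self_eq_one_of_orthonormalBasis b, ?_⟩
  ext i j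
  rw [mul_diagonal, of_apply]
  by_cases hj : μ j = 0
  · have : c j = 0 := inner_self_eq_zero.mp (by rw [hc, if_pos rfl, hj])
    simpa [hj] using congrArg (· i) this
  · rw [hb j hj]
    have hpos : 0 < √(μ j) := Real.sqrt_pos.mpr ((hμ j).lt_of_ne' hj)
    simp only [PiLp.smul_apply, smul_eq_mul, v, c]
    field_simp

lemma exists_singular_value_decomposition (M : Matrix ι ι ℝ) :
    ∃ (W : Matrix ι ι ℝ) (σ : ι → ℝ) (Q : Matrix ι ι ℝ),
      Wᵀ * W = 1 ∧ Qᵀ * Q = 1 ∧ (∀ j, 0 ≤ σ j) ∧ M = W * diagonal σ * Qᵀ := by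
  have hS : (Mᵀ * M).IsHermitian := by
    simpa [conjTranspose_eq_transpose_of_trivial] using isHermitian_conjTranspose_mul_self M
  obtain ⟨Q, μ, hQ, hQS⟩ := exists_orthogonal_transpose_mul_mul_eq_diagonal hS
  obtain ⟨W, hW, hMQ⟩ := exists_orthogonal_eq_mul_diagonal_sqrt (N := M * Q) (μ := μ)
    (by rw [← hQS, transpose_mul]; simp only [Matrix.mul_assoc])
  refine ⟨W, fun j => √(μ j), Q, hW, hQ, fun j => Real.sqrt_nonneg _, ?_⟩
  rw [← hMQ, Matrix.mul_assoc, mul_eq_one_comm.mp hQ, Matrix.mul_one]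

lemma exists_orthogonal_trace_transpose_mul_self_le {M : Matrix ι ι ℝ}
    (hM : (1 - Mᵀ * M).PosSemidef) :
    ∃ Ω : Matrix ι ι ℝ, Ωᵀ * Ω = 1 ∧ (Mᵀ * M).trace ≤ (Ωᵀ * M).trace := by
  obtain ⟨W, σ, Q, hW, hQ, hσ, rfl⟩ := exists_singular_value_decomposition M
  have hQ' : Q * Qᵀ = 1 := mul_eq_one_comm.mp hQ
  have htrace (D : Matrix ι ι ℝ) : (Q * D * Qᵀ).trace = D.trace := by
    rw [trace_mul_comm, ← Matrix.mul_assoc, hQ, Matrix.one_mul]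
  have hMM : (W * diagonal σ * Qᵀ)ᵀ * (W * diagonal σ * Qᵀ) = Q * diagonal (σ * σ) * Qᵀ := by
    simp only [transpose_mul, transpose_transpose, diagonal_transpose, Matrix.mul_assoc]
    rw [← Matrix.mul_assoc Wᵀ, hW, Matrix.one_mul, ← Matrix.mul_assoc (diagonal σ),
      diagonal_mul_diagonal]
    rfl
  have hσ1 (j : ι) : σ j * σ j ≤ 1 := by
    have hconj : Qᵀ * (1 - Q * diagonal (σ * σ) * Qᵀ) * Q = 1 - diagonal (σ * σ) := by
      rw [Matrix.mul_sub, Matrix.sub_mul, Matrix.mul_one, hQ, Matrix.mul_assoc, Matrix.mul_assoc,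
        hQ, Matrix.mul_one, ← Matrix.mul_assoc, hQ, Matrix.one_mul]
    have h := (hM.conjTranspose_mul_mul_same Q).diag_nonneg (i := j)
    rw [hMM, conjTranspose_eq_transpose_of_trivial, hconj] at h
    simpa [sub_nonneg] using h
  refine ⟨W * Qᵀ, ?_, ?_⟩
  · rw [transpose_mul, transpose_transpose, Matrix.mul_assoc, ← Matrix.mul_assoc Wᵀ, hW,
      Matrix.one_mul, hQ']
  · have hΩM : (W * Qᵀ)ᵀ * (W * diagonal σ * Qᵀ) = Q * diagonal σ * Qᵀ := by
      rw [transpose_mul, transpose_transpose, Matrix.mul_assoc, ← Matrix.mul_assoc Wᵀ,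
        ← Matrix.mul_assoc Wᵀ, hW, Matrix.one_mul, Matrix.mul_assoc]
    rw [hMM, hΩM, htrace, htrace, trace_diagonal, trace_diagonal]
    exact Finset.sum_le_sum fun j _ => by
      change σ j * σ j ≤ σ j
      nlinarith [hσ j, hσ1 j]

lemma posSemidef_one_sub_mul_transpose {m : Type*} [Fintype m] [DecidableEq m]
    {E : Matrix m ι ℝ} (hE : Eᵀ * E = 1) : (1 - E * Eᵀ).PosSemidef := by
  have hP : E * Eᵀ * (E * Eᵀ) = E * Eᵀ := by
    rw [Matrix.mul_assoc, ← Matrix.mul_assoc Eᵀ, hE, Matrix.one_mul]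
  have h : (1 - E * Eᵀ)ᵀ * (1 - E * Eᵀ) = 1 - E * Eᵀ := by
    rw [transpose_sub, transpose_one, transpose_mul, transpose_transpose, Matrix.sub_mul,
      Matrix.mul_sub, Matrix.mul_sub, hP]
    simp only [Matrix.one_mul, Matrix.mul_one, sub_self, sub_zero]
  rw [← h, ← conjTranspose_eq_transpose_of_trivial]
  exact posSemidef_conjTranspose_mul_self _

lemma posSemidef_one_sub_transpose_mul_self_transpose_mul {m κ : Type*} [Fintype m]
    [DecidableEq m] [Fintype κ] [DecidableEq κ] {E : Matrix m ι ℝ} {F : Matrix m κ ℝ}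
    (hE : Eᵀ * E = 1) (hF : Fᵀ * F = 1) : (1 - (Eᵀ * F)ᵀ * (Eᵀ * F)).PosSemidef := by
  have h : 1 - (Eᵀ * F)ᵀ * (Eᵀ * F) = Fᵀ * (1 - E * Eᵀ) * F := by
    rw [Matrix.mul_sub, Matrix.sub_mul, Matrix.mul_one, hF, transpose_mul, transpose_transpose]
    simp only [Matrix.mul_assoc]
  rw [h, ← conjTranspose_eq_transpose_of_trivial]
  exact (posSemidef_one_sub_mul_transpose hE).conjTranspose_mul_mul_same F

end Orthogonal

section Frobenius

variable {n m : ℕ}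

lemma frobSq_nonneg (A : Matrix (Fin n) (Fin m) ℝ) : 0 ≤ frobSq A := by
  unfold frobSq; positivity

lemma frobSq_eq_trace (A : Matrix (Fin n) (Fin m) ℝ) : frobSq A = (Aᵀ * A).trace := by
  rw [frobSq, trace, Finset.sum_comm]
  simp [mul_apply, sq]

lemma frobSq_sub (A B : Matrix (Fin n) (Fin m) ℝ) :
    frobSq (A - B) = frobSq A - 2 * (Aᵀ * B).trace + frobSq B := by
  have h : (Bᵀ * A).trace = (Aᵀ * B).trace := by
    rw [← trace_transpose, transpose_mul, transpose_transpose]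
  simp only [frobSq_eq_trace, transpose_sub, Matrix.sub_mul, Matrix.mul_sub, trace_sub, h]
  ring

lemma frobSq_of_transpose_mul_self_eq_one {A : Matrix (Fin n) (Fin m) ℝ} (hA : Aᵀ * A = 1) :
    frobSq A = m := by
  simp [frobSq_eq_trace, hA]

lemma frobSq_mul_transpose_of_transpose_mul_self_eq_one {A : Matrix (Fin n) (Fin m) ℝ}
    (hA : Aᵀ * A = 1) : frobSq (A * Aᵀ) = m := by
  rw [frobSq_eq_trace, transpose_mul, transpose_transpose, Matrix.mul_assoc,
    ← Matrix.mul_assoc Aᵀ, hA, Matrix.one_mul, trace_mul_comm, hA]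
  simp

end Frobenius

section Procrustes

variable {n d : ℕ} {E F : Matrix (Fin n) (Fin d) ℝ}

lemma frobSq_mul_sub (hE : Eᵀ * E = 1) (hF : Fᵀ * F = 1) {Ω : Matrix (Fin d) (Fin d) ℝ}
    (hΩ : Ωᵀ * Ω = 1) : frobSq (E * Ω - F) = 2 * d - 2 * (Ωᵀ * (Eᵀ * F)).trace := by
  have hEΩ : (E * Ω)ᵀ * (E * Ω) = 1 := by
    rw [transpose_mul, Matrix.mul_assoc, ← Matrix.mul_assoc Eᵀ, hE, Matrix.one_mul, hΩ]
  rw [frobSq_sub, frobSq_of_transpose_mul_self_eq_one hEΩ, frobSq_of_transpose_mul_self_eq_one hF,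
    transpose_mul, Matrix.mul_assoc]
  ring

lemma frobSq_mul_transpose_sub_mul_transpose (hE : Eᵀ * E = 1) (hF : Fᵀ * F = 1) :
    frobSq (E * Eᵀ - F * Fᵀ) = 2 * d - 2 * ((Eᵀ * F)ᵀ * (Eᵀ * F)).trace := by
  have hcross : ((E * Eᵀ)ᵀ * (F * Fᵀ)).trace = ((Eᵀ * F)ᵀ * (Eᵀ * F)).trace := by
    rw [transpose_mul, transpose_transpose, transpose_mul, transpose_transpose, Matrix.mul_assoc,
      trace_mul_comm E]
    simp only [Matrix.mul_assoc]
    rw [← Matrix.mul_assoc Eᵀ F, trace_mul_comm, Matrix.mul_assoc]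
  rw [frobSq_sub, frobSq_mul_transpose_of_transpose_mul_self_eq_one hE,
    frobSq_mul_transpose_of_transpose_mul_self_eq_one hF, hcross]
  ring

end Procrustes

theorem stmt0 {n d : ℕ} (E F : Matrix (Fin n) (Fin d) ℝ)
    (hE : Eᵀ * E = 1) (hF : Fᵀ * F = 1)
    (Ωstar : Matrix (Fin d) (Fin d) ℝ)
    (hΩstar : Ωstarᵀ * Ωstar = 1)
    (hmin : ∀ Ω : Matrix (Fin d) (Fin d) ℝ, Ωᵀ * Ω = 1 →
      frob (E * Ωstar - F) ≤ frob (E * Ω - F)) :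
    frob (E * Ωstar - F) ≤ frob (E * Eᵀ - F * Fᵀ) ∧
    frob (E * Eᵀ - F * Fᵀ) ≤ Real.sqrt 2 * frob (E * Ωstar - F) := by
  obtain ⟨Ω, hΩ, hΩM⟩ :=
    exists_orthogonal_trace_transpose_mul_self_le 
      (posSemidef_one_sub_transpose_mul_self_transpose_mul hE hF)
  have hlower : frobSq (E * Ωstar - F) ≤ frobSq (E * Eᵀ - F * Fᵀ) := calc
    frobSq (E * Ωstar - F) ≤ frobSq (E * Ω - F) :=
      (Real.sqrt_le_sqrt_iff (frobSq_nonneg _)).mp (hmin Ω hΩ)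
    _ ≤ frobSq (E * Eᵀ - F * Fᵀ) := by
      rw [frobSq_mul_sub hE hF hΩ, frobSq_mul_transpose_sub_mul_transpose hE hF]
      linarith
  have hupper : frobSq (E * Eᵀ - F * Fᵀ) ≤ 2 * frobSq (E * Ωstar - F) := by
    have h := frobSq_nonneg (Ωstar - Eᵀ * F)
    rw [frobSq_sub, frobSq_of_transpose_mul_self_eq_one hΩstar, frobSq_eq_trace (Eᵀ * F)] at h
    rw [frobSq_mul_sub hE hF hΩstar, frobSq_mul_transpose_sub_mul_transpose hE hF]
    linarith
  refine ⟨Real.sqrt_le_sqrt hlower, ?_⟩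
  rw [frob, frob, ← Real.sqrt_mul zero_le_two]
  exact Real.sqrt_le_sqrt hupper
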